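/- If $\hat A$ minimizes $F(A) = \|A - X\|_2 + \lambda \|A\|_1$ over $m_1 \times m_2$ real matrices, where $\|\cdot\|_2$ is the Frobenius norm, $\|\cdot\|_1$ is the nuclear norm and $\lambda > 0$, then $\mathrm{rank}(\hat A) \le 1/\lambda^2$. -/

import Mathlib

/-!
Let `r = rank Â` and let `t > 0` be at most every nonzero singular value of `Â`. Subtracting
`T = t • U Vᵀ` (from the thin SVD `Â = U Σ Vᵀ`) shifts each nonzero singular value down by `t`,
so the nuclear norm drops by `r t`, while `‖T‖₂ = t √r`. Optimality of `Â` and the triangle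
inequality give `λ r t ≤ t √r`, i.e. `r ≤ 1 / λ²`. The matrix `T` is realised without an SVD as
`Â f(ÂᵀÂ)`, `f x = t / √x`, via the continuous functional calculus.
-/

open Matrix

noncomputable def frobNorm {m n : ℕ} (A : Matrix (Fin m) (Fin n) ℝ) : ℝ :=
  Real.sqrt (∑ i, ∑ j, (A i j) ^ 2)

/-- Nuclear norm: sum of singular values, i.e. square roots of eigenvalues of `Aᴴ * A`. -/
noncomputable def nuclearNorm {m n : ℕ} (A : Matrix (Fin m) (Fin n) ℝ) : ℝ :=
  ∑ i, Real.sqrt ((Matrix.isHermitian_conjTranspose_mul_self A).eigenvalues i)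

/-- Operator (spectral) norm: supremum of `‖A v‖` over Euclidean unit vectors `v`. -/
noncomputable def opNorm {m n : ℕ} (M : Matrix (Fin m) (Fin n) ℝ) : ℝ :=
  sSup {c | ∃ v : Fin n → ℝ, ∑ i, (v i) ^ 2 = 1 ∧
    c = Real.sqrt (∑ i, (M.mulVec v i) ^ 2)}

def IsOrthProj {k : ℕ} (P : Matrix (Fin k) (Fin k) ℝ) : Prop :=
  P.IsSymm ∧ P * P = P

/-- `P` is the orthogonal projector onto the orthogonal complement of the column space of `A`
(the span of the left singular vectors of `A` for nonzero singular values is the column space,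
and similarly the row space, i.e. column space of `Aᵀ`, for right singular vectors). -/
def IsProjPerpCol {m n : ℕ} (A : Matrix (Fin m) (Fin n) ℝ)
    (P : Matrix (Fin m) (Fin m) ℝ) : Prop :=
  IsOrthProj P ∧ P * A = 0 ∧ P.rank = m - A.rank

/-- `P` is the orthogonal projector onto the column space of `A`. -/
def IsProjCol {m n : ℕ} (A : Matrix (Fin m) (Fin n) ℝ)
    (P : Matrix (Fin m) (Fin m) ℝ) : Prop :=
  IsOrthProj P ∧ P * A = A ∧ P.rank = A.rank

theorem Finite.exists_pos_forall_le_of_pos {ι : Type*} [Finite ι] (f : ι → ℝ) :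
    ∃ t > 0, ∀ i, 0 < f i → t ≤ f i := by
  obtain ⟨t, ht⟩ := Finite.exists_ge fun i =>
    if hi : 0 < f i then (⟨f i, hi⟩ : {x : ℝ // 0 < x}) else ⟨1, one_pos⟩
  refine ⟨t, t.2, fun i hi => ?_⟩
  simpa [hi, ← Subtype.coe_le_coe] using ht i

theorem Matrix.IsHermitian.trace_cfc {n : Type*} [Fintype n] [DecidableEq n]
    {M : Matrix n n ℝ} (hM : M.IsHermitian) (f : ℝ → ℝ) :
    (cfc f M).trace = ∑ i, f (hM.eigenvalues i) := by
  rw [hM.cfc_eq, IsHermitian.cfc, Unitary.conjStarAlgAut_apply, trace_mul_cycle,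
    Unitary.coe_star_mul_self, one_mul, trace_diagonal]
  rfl

variable {m n : ℕ}

noncomputable def gramEigenvalues (A : Matrix (Fin m) (Fin n) ℝ) : Fin n → ℝ :=
  (isHermitian_conjTranspose_mul_self A).eigenvalues

theorem gramEigenvalues_nonneg (A : Matrix (Fin m) (Fin n) ℝ) (i : Fin n) :
    0 ≤ gramEigenvalues A i :=
  (posSemidef_conjTranspose_mul_self A).eigenvalues_nonneg i

theorem cast_rank_eq_sum_ite (A : Matrix (Fin m) (Fin n) ℝ) :
    (A.rank : ℝ) = ∑ i, if gramEigenvalues A i ≠ 0 then 1 else 0 := by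
  rw [← Finset.sum_filter, Finset.sum_const, nsmul_one, ← rank_conjTranspose_mul_self,
    (isHermitian_conjTranspose_mul_self A).rank_eq_card_non_zero_eigs, Fintype.card_subtype]
  rfl

theorem frobNorm_sub_le (A B : Matrix (Fin m) (Fin n) ℝ) :
    frobNorm (A - B) ≤ frobNorm A + frobNorm B := by
  open scoped Matrix.Norms.Frobenius in
  have hnorm : ∀ C : Matrix (Fin m) (Fin n) ℝ, frobNorm C = ‖C‖ := fun C => by
    simp [frobNorm, frobenius_norm_def, Real.sqrt_eq_rpow]
  simpa only [hnorm] using norm_sub_le A B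

theorem frobNorm_eq_sqrt_trace (A : Matrix (Fin m) (Fin n) ℝ) :
    frobNorm A = Real.sqrt (Aᴴ * A).trace := by
  rw [frobNorm, Finset.sum_comm]
  simp [Matrix.trace, Matrix.mul_apply, sq]

theorem gram_mul_cfc (A : Matrix (Fin m) (Fin n) ℝ) (f : ℝ → ℝ) :
    (A * cfc f (Aᴴ * A))ᴴ * (A * cfc f (Aᴴ * A)) = cfc (fun x => f x ^ 2 * x) (Aᴴ * A) := by
  have hM : IsSelfAdjoint (Aᴴ * A) := isHermitian_conjTranspose_mul_self A
  have hcont (g : ℝ → ℝ) : ContinuousOn g (spectrum ℝ (Aᴴ * A)) :=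
    (Aᴴ * A).finite_real_spectrum.continuousOn g
  rw [conjTranspose_mul, ← star_eq_conjTranspose, (cfc_predicate f _ : IsSelfAdjoint _).star_eq]
  have hfun : (fun x => f x ^ 2 * x) = fun x => f x * x * f x := by ext; ring
  rw [hfun, cfc_mul _ _ _ (hcont _) (hcont _), cfc_mul _ _ _ (hcont _) (hcont _),
    cfc_id' ℝ (Aᴴ * A)]
  simp only [Matrix.mul_assoc]

theorem frobNorm_mul_cfc (A : Matrix (Fin m) (Fin n) ℝ) (f : ℝ → ℝ) :
    frobNorm (A * cfc f (Aᴴ * A)) =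
      Real.sqrt (∑ i, f (gramEigenvalues A i) ^ 2 * gramEigenvalues A i) := by
  rw [frobNorm_eq_sqrt_trace, gram_mul_cfc, IsHermitian.trace_cfc]
  rfl

theorem nuclearNorm_mul_cfc (A : Matrix (Fin m) (Fin n) ℝ) (f : ℝ → ℝ) :
    nuclearNorm (A * cfc f (Aᴴ * A)) =
      ∑ i, |f (gramEigenvalues A i)| * Real.sqrt (gramEigenvalues A i) := by
  have hM : IsSelfAdjoint (Aᴴ * A) := isHermitian_conjTranspose_mul_self A
  have hfin := (Aᴴ * A).finite_real_spectrum
  rw [nuclearNorm, ← IsHermitian.trace_cfc, gram_mul_cfc,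
    ← cfc_comp' _ _ _ ((hfin.image _).continuousOn _) (hfin.continuousOn _),
    IsHermitian.trace_cfc]
  refine Finset.sum_congr rfl fun i _ => ?_
  rw [Real.sqrt_mul (sq_nonneg _), Real.sqrt_sq_eq_abs]
  rfl

theorem frobNorm_mul_cfc_div_sqrt (A : Matrix (Fin m) (Fin n) ℝ) {t : ℝ} (ht : 0 ≤ t) :
    frobNorm (A * cfc (fun x => t / Real.sqrt x) (Aᴴ * A)) = t * Real.sqrt A.rank := by
  have hterm (i) : (t / Real.sqrt (gramEigenvalues A i)) ^ 2 * gramEigenvalues A i =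
      t ^ 2 * if gramEigenvalues A i ≠ 0 then 1 else 0 := by
    split_ifs with hi
    · rw [div_pow, Real.sq_sqrt (gramEigenvalues_nonneg A i), div_mul_cancel₀ _ hi, mul_one]
    · simp [not_not.mp hi]
  rw [frobNorm_mul_cfc, Finset.sum_congr rfl fun i _ => hterm i, ← Finset.mul_sum,
    ← cast_rank_eq_sum_ite, Real.sqrt_mul (sq_nonneg t), Real.sqrt_sq ht]

theorem nuclearNorm_sub_mul_cfc_div_sqrt (A : Matrix (Fin m) (Fin n) ℝ) {t : ℝ}
    (hle : ∀ i, 0 < Real.sqrt (gramEigenvalues A i) → t ≤ Real.sqrt (gramEigenvalues A i)) :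
    nuclearNorm (A - A * cfc (fun x => t / Real.sqrt x) (Aᴴ * A)) =
      nuclearNorm A - A.rank * t := by
  have hsub : A - A * cfc (fun x => t / Real.sqrt x) (Aᴴ * A) =
      A * cfc (fun x => 1 - t / Real.sqrt x) (Aᴴ * A) := by
    have hfin := (Aᴴ * A).finite_real_spectrum
    have hone : cfc (fun _ : ℝ => (1 : ℝ)) (Aᴴ * A) = 1 :=
      cfc_const_one ℝ _ (isHermitian_conjTranspose_mul_self A)
    rw [cfc_sub _ _ _ (hfin.continuousOn _) (hfin.continuousOn _), hone,
      Matrix.mul_sub, Matrix.mul_one]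
  have hterm (i) : |1 - t / Real.sqrt (gramEigenvalues A i)| * Real.sqrt (gramEigenvalues A i) =
      Real.sqrt (gramEigenvalues A i) - t * if gramEigenvalues A i ≠ 0 then 1 else 0 := by
    split_ifs with hi
    · have hσ : 0 < Real.sqrt (gramEigenvalues A i) :=
        Real.sqrt_pos.mpr ((gramEigenvalues_nonneg A i).lt_of_ne' hi)
      rw [← abs_of_pos hσ, ← abs_mul, abs_of_pos hσ, sub_mul, div_mul_cancel₀ _ hσ.ne',
        one_mul, mul_one, abs_of_nonneg (sub_nonneg.mpr (hle i hσ))]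
    · simp [not_not.mp hi]
  rw [hsub, nuclearNorm_mul_cfc, Finset.sum_congr rfl fun i _ => hterm i,
    Finset.sum_sub_distrib, ← Finset.mul_sum, ← cast_rank_eq_sum_ite, mul_comm]
  rfl

theorem le_one_div_sq_of_mul_le_sqrt {lam r : ℝ} (hlam : 0 < lam) (hr : 0 ≤ r)
    (h : lam * r ≤ Real.sqrt r) : r ≤ 1 / lam ^ 2 := by
  have hsq : (lam * r) ^ 2 ≤ r := by
    simpa [Real.sq_sqrt hr] using pow_le_pow_left₀ (by positivity) h 2
  rw [le_div_iff₀ (by positivity)]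
  nlinarith

/-- If $\hat A$ minimizes $A ↦ ‖A - X‖_2 + λ‖A‖_1$ then $\mathrm{rank}(\hat A) ≤ 1/λ^2$. -/
theorem stmt0 {m1 m2 : ℕ} (X : Matrix (Fin m1) (Fin m2) ℝ) (lam : ℝ) (hlam : 0 < lam)
    (Ahat : Matrix (Fin m1) (Fin m2) ℝ)
    (hmin : ∀ A : Matrix (Fin m1) (Fin m2) ℝ,
      frobNorm (Ahat - X) + lam * nuclearNorm Ahat ≤ frobNorm (A - X) + lam * nuclearNorm A) :
    (Ahat.rank : ℝ) ≤ 1 / lam ^ 2 := by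
  obtain ⟨t, ht, hle⟩ :=
    Finite.exists_pos_forall_le_of_pos fun i => Real.sqrt (gramEigenvalues Ahat i)
  set T := Ahat * cfc (fun x => t / Real.sqrt x) (Ahatᴴ * Ahat)
  have hfrobT : frobNorm T = t * Real.sqrt Ahat.rank := frobNorm_mul_cfc_div_sqrt Ahat ht.le
  have hnucT : nuclearNorm (Ahat - T) = nuclearNorm Ahat - Ahat.rank * t :=
    nuclearNorm_sub_mul_cfc_div_sqrt Ahat hle
  have htri : frobNorm (Ahat - T - X) ≤ frobNorm (Ahat - X) + frobNorm T := by
    rw [sub_right_comm]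
    exact frobNorm_sub_le _ _
  have hdescent : lam * Ahat.rank * t ≤ Real.sqrt Ahat.rank * t := by
    have hopt := hmin (Ahat - T)
    rw [hnucT] at hopt
    linarith
  exact le_one_div_sq_of_mul_le_sqrt hlam (Nat.cast_nonneg _) (le_of_mul_le_mul_right hdescent ht)
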